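/- Let (a,b) be a binary GCP of length M. Let c = (1,1,1,−1,−1,−1,1,−1,−1,1,−1,1,1,1,1,1,−1,−1,1,1,−1,1,−1,1) and d = (1,1,1,−1,−1,−1,1,−1,−1,1,−1,−1,−1,−1,−1,−1,1,1,−1,−1,1,−1,1,−1) be the binary sequences of length 24 obtained by concatenating the Barker sequence of length 11 with the Barker sequence of length 13 and with its negation, respectively. Define length-24M binary sequences e, f by e_{mM+j} = c_m·(a_j+b_j)/2 − d_{23−m}·(b_j−a_j)/2 and f_{mM+j} = d_m·(a_j+b_j)/2 + c_{23−m}·(b_j−a_j)/2 for 0 ≤ m < 24 and 0 ≤ j < M. Then (e,f) is a binary (24M, 11M)-CZCP. -/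

import Mathlib

/-!
Put `s = (a + b) / 2` and `t = (b - a) / 2`; with `(c, d)` the `(N, Z) = (24, 11)`-CZCP,
`e = c ⊗ s - rev d ⊗ t` and `f = d ⊗ s + rev c ⊗ t` (Kronecker products, block `m` of
`x ⊗ s` being `x m • s`).
A shift `pM + q` (`q < M`) of a Kronecker product moves block `m` to blocks `m + p` and
`m + p + 1`, hence
`ρ_{x⊗s, y⊗t}(pM + q) = ρ_{x,y}(p) ρ_{s,t}(q) + ρ_{x,y}(p+1) ρ_{t,s}(M-q)`.
Expanding bilinearly, the mixed terms of `ρ_e + ρ_f` cancel by reversal symmetry, and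
`ρ_s + ρ_t = (ρ_a + ρ_b) / 2` vanishes at nonzero shifts, so only `q = 0` survives, where the
factor is `ρ_c(p) + ρ_d(p) = 0`. In `ρ_{e,f} + ρ_{f,e}` at shifts `≥ (N - Z) M` the remaining
mixed terms `ρ_{c, rev c} - ρ_{d, rev d}` and `ρ_{rev c, c} - ρ_{rev d, d}` only see the first
`Z` or the last `N - Z` entries, where `d = c`, resp. `d = -c` (the two Barker halves).
-/

/-- Aperiodic cross-correlation at shift `τ` of two length-`L` real sequences
(indexed `0, …, L-1`); it vanishes for `τ ≥ L`. -/
noncomputable def rhoR (L : ℕ) (u v : ℕ → ℝ) (τ : ℕ) : ℝ :=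
  ∑ k ∈ Finset.range (L - τ), u k * v (k + τ)

/-- A binary sequence of length `L`: all entries in `{+1, -1}`. -/
def IsBinary (L : ℕ) (u : ℕ → ℝ) : Prop := ∀ i < L, u i = 1 ∨ u i = -1

/-- `(u, v)` is a binary Golay complementary pair (GCP) of length `L`:
both are binary and the autocorrelation sums vanish for `1 ≤ τ ≤ L - 1`. -/
noncomputable def IsGCP (L : ℕ) (u v : ℕ → ℝ) : Prop :=
  IsBinary L u ∧ IsBinary L v ∧
    ∀ τ : ℕ, 1 ≤ τ → τ ≤ L - 1 → rhoR L u u τ + rhoR L v v τ = 0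

/-- `(u, v)` (length-`L` real sequences) is an `(L, Z)`-CZCP:
(C1) the autocorrelation sums vanish for `τ ∈ {1,…,Z} ∪ {L-Z,…,L-1}`, and
(C2) the cross-correlation sums vanish for `τ ∈ {L-Z,…,L-1}`. -/
noncomputable def IsCZCPR (L Z : ℕ) (u v : ℕ → ℝ) : Prop :=
  (∀ τ : ℕ, ((1 ≤ τ ∧ τ ≤ Z) ∨ (L - Z ≤ τ ∧ τ ≤ L - 1)) →
    rhoR L u u τ + rhoR L v v τ = 0) ∧
  (∀ τ : ℕ, (L - Z ≤ τ ∧ τ ≤ L - 1) → rhoR L u v τ + rhoR L v u τ = 0)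

/-- The optimal binary `(24, 11)`-CZCP: the length-11 Barker sequence followed by the
length-13 Barker sequence. -/
noncomputable def c24 : ℕ → ℝ := fun i =>
  (([1, 1, 1, -1, -1, -1, 1, -1, -1, 1, -1,
     1, 1, 1, 1, 1, -1, -1, 1, 1, -1, 1, -1, 1] : List ℝ).getD i 0)

/-- The optimal binary `(24, 11)`-CZCP: the length-11 Barker sequence followed by the
negation of the length-13 Barker sequence. -/
noncomputable def d24 : ℕ → ℝ := fun i =>
  (([1, 1, 1, -1, -1, -1, 1, -1, -1, 1, -1,
     -1, -1, -1, -1, -1, 1, 1, -1, -1, 1, -1, 1, -1] : List ℝ).getD i 0)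

open Finset

def kron (M : ℕ) (x s : ℕ → ℝ) : ℕ → ℝ := fun i => x (i / M) * s (i % M)

def rev (N : ℕ) (x : ℕ → ℝ) : ℕ → ℝ := fun m => x (N - 1 - m)

theorem rhoR_of_le {L τ : ℕ} (h : L ≤ τ) (u v : ℕ → ℝ) : rhoR L u v τ = 0 := by
  simp [rhoR, Nat.sub_eq_zero_of_le h]

theorem rhoR_add_left (L : ℕ) (u u' v : ℕ → ℝ) (τ : ℕ) :
    rhoR L (u + u') v τ = rhoR L u v τ + rhoR L u' v τ := by
  simp only [rhoR, Pi.add_apply, add_mul, sum_add_distrib]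

theorem rhoR_add_right (L : ℕ) (u v v' : ℕ → ℝ) (τ : ℕ) :
    rhoR L u (v + v') τ = rhoR L u v τ + rhoR L u v' τ := by
  simp only [rhoR, Pi.add_apply, mul_add, sum_add_distrib]

theorem rhoR_sub_left (L : ℕ) (u u' v : ℕ → ℝ) (τ : ℕ) :
    rhoR L (u - u') v τ = rhoR L u v τ - rhoR L u' v τ := by
  simp only [rhoR, Pi.sub_apply, sub_mul, sum_sub_distrib]

theorem rhoR_sub_right (L : ℕ) (u v v' : ℕ → ℝ) (τ : ℕ) :
    rhoR L u (v - v') τ = rhoR L u v τ - rhoR L u v' τ := by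
  simp only [rhoR, Pi.sub_apply, mul_sub, sum_sub_distrib]

theorem rhoR_eq_sum_sum (L : ℕ) (u v : ℕ → ℝ) (τ : ℕ) :
    rhoR L u v τ =
      ∑ i ∈ range L, ∑ i' ∈ range L, if i' = i + τ then u i * v i' else 0 := by
  simp only [sum_ite_eq', mem_range]
  rw [rhoR, ← sum_filter]
  congr 1
  ext i
  simp only [mem_range, mem_filter]
  omega

theorem sum_range_mul_eq_sum_sum {β : Type*} [AddCommMonoid β] (N M : ℕ) (F : ℕ → β) :
    ∑ i ∈ range (N * M), F i = ∑ m ∈ range N, ∑ j ∈ range M, F (M * m + j) := by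
  induction N with
  | zero => simp
  | succ N ih => rw [Nat.succ_mul, sum_range_add, ih, sum_range_succ, Nat.mul_comm N M]

theorem mul_add_eq_mul_add_iff {M a b r r' : ℕ} (hr : r < M) (hr' : r' < M) :
    M * a + r = M * b + r' ↔ a = b ∧ r = r' := by
  refine ⟨fun h => ?_, fun ⟨hab, hrr⟩ => hab ▸ hrr ▸ rfl⟩
  have hM : 0 < M := by omega
  have hdiv := congrArg (· / M) h
  have hmod := congrArg (· % M) h
  simp only [Nat.mul_add_div hM, Nat.div_eq_of_lt hr, Nat.div_eq_of_lt hr', Nat.mul_add_mod,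
    Nat.mod_eq_of_lt hr, Nat.mod_eq_of_lt hr', add_zero] at hdiv hmod
  exact ⟨hdiv, hmod⟩

theorem mul_add_eq_mul_add_add_mul_add_iff {M m j m' j' p q : ℕ} (hj : j < M) (hj' : j' < M)
    (hq : q < M) :
    M * m' + j' = M * m + j + (M * p + q) ↔
      (m' = m + p ∧ j' = j + q) ∨ (m' = m + (p + 1) ∧ j = j' + (M - q)) := by
  by_cases hcarry : j + q < M
  · rw [show M * m + j + (M * p + q) = M * (m + p) + (j + q) by ring,
      mul_add_eq_mul_add_iff hj' hcarry]
    omega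
  · obtain ⟨k, hk⟩ : ∃ k, j + q = M + k := ⟨j + q - M, by omega⟩
    rw [show M * m + j + (M * p + q) = M * (m + (p + 1)) + k by linarith,
      mul_add_eq_mul_add_iff hj' (by omega)]
    omega

theorem rhoR_kron {N M p q : ℕ} (hq : q < M) (x y s t : ℕ → ℝ) :
    rhoR (N * M) (kron M x s) (kron M y t) (M * p + q) =
      rhoR N x y p * rhoR M s t q + rhoR N x y (p + 1) * rhoR M t s (M - q) := by
  have hM : 0 < M := by omega
  have hts : rhoR M t s (M - q) =
      ∑ j ∈ range M, ∑ j' ∈ range M, if j = j' + (M - q) then t j' * s j else 0 := by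
    rw [rhoR_eq_sum_sum, sum_comm]
  rw [rhoR_eq_sum_sum N x y p, rhoR_eq_sum_sum M s t q, rhoR_eq_sum_sum N x y (p + 1), hts]
  simp only [sum_mul_sum, ← sum_add_distrib]
  rw [rhoR_eq_sum_sum, sum_range_mul_eq_sum_sum]
  refine sum_congr rfl fun m _ => sum_congr rfl fun j hj => ?_
  rw [sum_range_mul_eq_sum_sum]
  refine sum_congr rfl fun m' _ => sum_congr rfl fun j' hj' => ?_
  rw [mem_range] at hj hj'
  simp only [kron, Nat.mul_add_div hM, Nat.div_eq_of_lt hj, Nat.div_eq_of_lt hj',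
    Nat.mul_add_mod, Nat.mod_eq_of_lt hj, Nat.mod_eq_of_lt hj', add_zero,
    mul_add_eq_mul_add_add_mul_add_iff hj hj' hq]
  split_ifs <;> first | omega | ring

theorem rhoR_rev_rev (N : ℕ) (x y : ℕ → ℝ) (p : ℕ) :
    rhoR N (rev N x) (rev N y) p = rhoR N y x p := by
  rw [rhoR, rhoR, ← sum_range_reflect]
  refine sum_congr rfl fun m hm => ?_
  rw [mem_range] at hm
  simp only [rev]
  rw [mul_comm]
  congr 2 <;> omega

theorem rhoR_rev_right (N : ℕ) (x y : ℕ → ℝ) (p : ℕ) :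
    rhoR N x (rev N y) p = rhoR N y (rev N x) p := by
  rw [rhoR, rhoR, ← sum_range_reflect]
  refine sum_congr rfl fun m hm => ?_
  rw [mem_range] at hm
  simp only [rev]
  rw [mul_comm]
  congr 2 <;> omega

theorem rhoR_rev_left (N : ℕ) (x y : ℕ → ℝ) (p : ℕ) :
    rhoR N (rev N x) y p = rhoR N (rev N y) x p := by
  rw [rhoR, rhoR, ← sum_range_reflect]
  refine sum_congr rfl fun m hm => ?_
  rw [mem_range] at hm
  simp only [rev]
  rw [mul_comm]
  congr 2 <;> omega

section Turyn

variable {N M : ℕ} (c d s t : ℕ → ℝ)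

theorem rhoR_turyn_auto {p q : ℕ} (hq : q < M) :
    rhoR (N * M) (kron M c s - kron M (rev N d) t) (kron M c s - kron M (rev N d) t)
        (M * p + q)
      + rhoR (N * M) (kron M d s + kron M (rev N c) t) (kron M d s + kron M (rev N c) t)
        (M * p + q) =
      (rhoR N c c p + rhoR N d d p) * (rhoR M s s q + rhoR M t t q)
        + (rhoR N c c (p + 1) + rhoR N d d (p + 1))
          * (rhoR M s s (M - q) + rhoR M t t (M - q)) := by
  simp only [rhoR_add_left, rhoR_add_right, rhoR_sub_left, rhoR_sub_right, rhoR_kron hq,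
    rhoR_rev_rev, rhoR_rev_right N c d, rhoR_rev_left N d c]
  ring

theorem rhoR_turyn_cross {p q : ℕ} (hq : q < M) :
    rhoR (N * M) (kron M c s - kron M (rev N d) t) (kron M d s + kron M (rev N c) t)
        (M * p + q)
      + rhoR (N * M) (kron M d s + kron M (rev N c) t) (kron M c s - kron M (rev N d) t)
        (M * p + q) =
      (rhoR N c d p + rhoR N d c p) * (rhoR M s s q - rhoR M t t q)
        + (rhoR N c d (p + 1) + rhoR N d c (p + 1))
          * (rhoR M s s (M - q) - rhoR M t t (M - q))
        + (rhoR N c (rev N c) p - rhoR N d (rev N d) p) * rhoR M s t q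
        + (rhoR N c (rev N c) (p + 1) - rhoR N d (rev N d) (p + 1)) * rhoR M t s (M - q)
        + (rhoR N (rev N c) c p - rhoR N (rev N d) d p) * rhoR M t s q
        + (rhoR N (rev N c) c (p + 1) - rhoR N (rev N d) d (p + 1)) * rhoR M s t (M - q) := by
  simp only [rhoR_add_left, rhoR_add_right, rhoR_sub_left, rhoR_sub_right, rhoR_kron hq,
    rhoR_rev_rev]
  ring

end Turyn

theorem rhoR_self_rev_congr {N p : ℕ} {c d : ℕ → ℝ} (h : ∀ i < N - p, d i = c i) :
    rhoR N d (rev N d) p = rhoR N c (rev N c) p := by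
  refine sum_congr rfl fun m hm => ?_
  rw [mem_range] at hm
  simp only [rev]
  rw [h m hm, h (N - 1 - (m + p)) (by omega)]

theorem rhoR_rev_self_congr_neg {N p : ℕ} {c d : ℕ → ℝ}
    (h : ∀ i, p ≤ i → i < N → d i = -c i) :
    rhoR N (rev N d) d p = rhoR N (rev N c) c p := by
  refine sum_congr rfl fun m hm => ?_
  rw [mem_range] at hm
  simp only [rev]
  rw [h (N - 1 - m) (by omega) (by omega), h (m + p) (by omega) (by omega), neg_mul_neg]

theorem IsCZCPR.cross_eq_zero {N Z : ℕ} {c d : ℕ → ℝ} (h : IsCZCPR N Z c d) {τ : ℕ}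
    (hτ : N - Z ≤ τ) : rhoR N c d τ + rhoR N d c τ = 0 := by
  rcases le_or_gt N τ with hNτ | hτN
  · simp [rhoR_of_le hNτ]
  · exact h.2 τ ⟨hτ, by omega⟩

theorem IsGCP.rhoR_half_add_half_sub {M : ℕ} {a b : ℕ → ℝ} (h : IsGCP M a b) {τ : ℕ}
    (hτ : 1 ≤ τ) :
    rhoR M (fun j => (a j + b j) / 2) (fun j => (a j + b j) / 2) τ
      + rhoR M (fun j => (b j - a j) / 2) (fun j => (b j - a j) / 2) τ = 0 := by
  rcases le_or_gt M τ with hMτ | hτM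
  · simp [rhoR_of_le hMτ]
  · have hsum : rhoR M (fun j => (a j + b j) / 2) (fun j => (a j + b j) / 2) τ
        + rhoR M (fun j => (b j - a j) / 2) (fun j => (b j - a j) / 2) τ
        = (rhoR M a a τ + rhoR M b b τ) / 2 := by
      simp only [rhoR, ← sum_add_distrib, sum_div]
      exact sum_congr rfl fun k _ => by ring
    rw [hsum, h.2.2 τ hτ (by omega), zero_div]

theorem IsCZCPR.turyn {N Z M : ℕ} {c d s t : ℕ → ℝ} (hcd : IsCZCPR N Z c d)
    (hhead : ∀ i < Z, d i = c i) (htail : ∀ i, N - Z ≤ i → i < N → d i = -c i)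
    (hst : ∀ τ, 1 ≤ τ → rhoR M s s τ + rhoR M t t τ = 0) :
    IsCZCPR (N * M) (Z * M)
      (kron M c s - kron M (rev N d) t) (kron M d s + kron M (rev N c) t) := by
  have hblock : ∀ τ < N * M, ∃ p q, q < M ∧ τ = M * p + q := fun τ hτ =>
    have hM : 0 < M := Nat.pos_of_mul_pos_left (a := N) (by omega)
    ⟨τ / M, τ % M, Nat.mod_lt τ hM, (Nat.div_add_mod τ M).symm⟩
  refine ⟨fun τ hτ => ?_, fun τ hτ => ?_⟩
  · rcases le_or_gt (N * M) τ with hLτ | hτL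
    · simp only [rhoR_of_le hLτ, add_zero]
    obtain ⟨p, q, hq, rfl⟩ := hblock τ hτL
    rw [rhoR_turyn_auto c d s t hq]
    rcases Nat.eq_zero_or_pos q with rfl | hq0
    · have hp : (1 ≤ p ∧ p ≤ Z) ∨ (N - Z ≤ p ∧ p ≤ N - 1) := by
        have hpN : p < N := by nlinarith
        rw [← Nat.sub_mul] at hτ
        rcases hτ with ⟨h1, h2⟩ | ⟨h1, -⟩
        · exact Or.inl ⟨by nlinarith, by nlinarith⟩
        · exact Or.inr ⟨by nlinarith, by omega⟩
      rw [hcd.1 p hp, Nat.sub_zero, rhoR_of_le le_rfl, rhoR_of_le le_rfl]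
      ring
    · rw [hst q hq0, hst (M - q) (by omega)]
      ring
  · rcases le_or_gt (N * M) τ with hLτ | hτL
    · simp only [rhoR_of_le hLτ, add_zero]
    obtain ⟨p, q, hq, rfl⟩ := hblock τ hτL
    have hp : N - Z ≤ p := by
      rw [← Nat.sub_mul] at hτ
      nlinarith
    rw [rhoR_turyn_cross c d s t hq, hcd.cross_eq_zero hp,
      hcd.cross_eq_zero (τ := p + 1) (by omega),
      rhoR_self_rev_congr (p := p) (fun i _ => hhead i (by omega)),
      rhoR_self_rev_congr (p := p + 1) (fun i _ => hhead i (by omega)),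
      rhoR_rev_self_congr_neg (p := p) (fun i _ hiN => htail i (by omega) hiN),
      rhoR_rev_self_congr_neg (p := p + 1) (fun i _ hiN => htail i (by omega) hiN)]
    ring

theorem kron_neg_left (M : ℕ) (x s : ℕ → ℝ) : kron M (-x) s = -kron M x s :=
  funext fun _ => neg_mul _ _

theorem IsBinary.neg {N : ℕ} {x : ℕ → ℝ} (h : IsBinary N x) : IsBinary N (-x) := by
  intro i hi
  rcases h i hi with hx | hx <;> simp [hx]

theorem IsBinary.rev {N : ℕ} {x : ℕ → ℝ} (h : IsBinary N x) : IsBinary N (rev N x) :=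
  fun i hi => h (N - 1 - i) (by omega)

theorem mul_half_add_mul_half_sub_eq_one_or {a b x y : ℝ} (ha : a = 1 ∨ a = -1)
    (hb : b = 1 ∨ b = -1) (hx : x = 1 ∨ x = -1) (hy : y = 1 ∨ y = -1) :
    x * ((a + b) / 2) + y * ((b - a) / 2) = 1 ∨ x * ((a + b) / 2) + y * ((b - a) / 2) = -1 := by
  rcases ha with rfl | rfl <;> rcases hb with rfl | rfl <;> rcases hx with rfl | rfl <;>
    rcases hy with rfl | rfl <;> norm_num

theorem IsBinary.kron_half_add {N M : ℕ} {x y a b : ℕ → ℝ} (hx : IsBinary N x)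
    (hy : IsBinary N y) (ha : IsBinary M a) (hb : IsBinary M b) :
    IsBinary (N * M)
      (kron M x (fun j => (a j + b j) / 2) + kron M y (fun j => (b j - a j) / 2)) := by
  intro i hi
  have hM : 0 < M := Nat.pos_of_mul_pos_left (a := N) (by omega)
  have hblock : i / M < N := (Nat.div_lt_iff_lt_mul hM).2 hi
  have hj : i % M < M := Nat.mod_lt i hM
  exact mul_half_add_mul_half_sub_eq_one_or (ha _ hj) (hb _ hj) (hx _ hblock) (hy _ hblock)

theorem isCZCPR_c24_d24 : IsCZCPR 24 11 c24 d24 := by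
  refine ⟨fun τ hτ => ?_, fun τ hτ => ?_⟩ <;>
  · have hτ24 : τ ≤ 23 := by omega
    interval_cases τ <;> first
      | omega
      | norm_num only [rhoR, sum_range_succ, sum_range_zero, c24, d24, List.getD_cons_succ,
          List.getD_cons_zero]

theorem d24_eq_c24 : ∀ i < 11, d24 i = c24 i := by
  intro i hi
  interval_cases i <;> norm_num [c24, d24]

theorem d24_eq_neg_c24 : ∀ i, 13 ≤ i → i < 24 → d24 i = -c24 i := by
  intro i hi hi'
  interval_cases i <;> norm_num [c24, d24]

theorem isBinary_c24 : IsBinary 24 c24 := by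
  intro i hi
  interval_cases i <;> norm_num [c24]

theorem isBinary_d24 : IsBinary 24 d24 := by
  intro i hi
  interval_cases i <;> norm_num [d24]

theorem stmt_17_general (M : ℕ) (a b : ℕ → ℝ) (hab : IsGCP M a b)
    (e f : ℕ → ℝ)
    (he : ∀ i, e i = c24 (i / M) * (a (i % M) + b (i % M)) / 2
      - d24 (23 - i / M) * (b (i % M) - a (i % M)) / 2)
    (hf : ∀ i, f i = d24 (i / M) * (a (i % M) + b (i % M)) / 2
      + c24 (23 - i / M) * (b (i % M) - a (i % M)) / 2) :
    IsBinary (24 * M) e ∧ IsBinary (24 * M) f ∧ IsCZCPR (24 * M) (11 * M) e f := by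
  have he' : e = kron M c24 (fun j => (a j + b j) / 2)
      - kron M (rev 24 d24) (fun j => (b j - a j) / 2) := by
    funext i
    rw [he]
    simp only [Pi.sub_apply, kron, rev, Nat.reduceSub]
    ring
  have hf' : f = kron M d24 (fun j => (a j + b j) / 2)
      + kron M (rev 24 c24) (fun j => (b j - a j) / 2) := by
    funext i
    rw [hf]
    simp only [Pi.add_apply, kron, rev, Nat.reduceSub]
    ring
  refine ⟨?_, hf' ▸ isBinary_d24.kron_half_add isBinary_c24.rev hab.1 hab.2.1, ?_⟩
  · rw [he', sub_eq_add_neg, ← kron_neg_left]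
    exact isBinary_c24.kron_half_add isBinary_d24.rev.neg hab.1 hab.2.1
  · rw [he', hf']
    exact isCZCPR_c24_d24.turyn d24_eq_c24 d24_eq_neg_c24 fun _ => hab.rhoR_half_add_half_sub

/-- If `(a, b)` is a binary GCP of length `M`, then the Turyn product of
`(a, b)` with the optimal `(24, 11)`-CZCP `(c24, d24)` — i.e. the length-`24M` sequences
`e, f` given at index `mM + j` by `e_{mM+j} = c_m (a_j + b_j)/2 - d_{23-m} (b_j - a_j)/2`
and `f_{mM+j} = d_m (a_j + b_j)/2 + c_{23-m} (b_j - a_j)/2` — is a binary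
`(24M, 11M)`-CZCP. -/
theorem stmt_17 (M : ℕ) (hM : 0 < M) (a b : ℕ → ℝ) (hab : IsGCP M a b)
    (e f : ℕ → ℝ)
    (he : ∀ i, e i = c24 (i / M) * (a (i % M) + b (i % M)) / 2
      - d24 (23 - i / M) * (b (i % M) - a (i % M)) / 2)
    (hf : ∀ i, f i = d24 (i / M) * (a (i % M) + b (i % M)) / 2
      + c24 (23 - i / M) * (b (i % M) - a (i % M)) / 2) :
    IsBinary (24 * M) e ∧ IsBinary (24 * M) f ∧ IsCZCPR (24 * M) (11 * M) e f :=
  stmt_17_general M a b hab e f he hf
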